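/- The function m(θ) = θ/2 - 1/2 + (θ/2)√(1 - 2/θ) + log(1/2 - (1/2)√(1 - 2/θ)) is strictly increasing on [2, ∞). -/

import Mathlib

/-!
Put `s = √(1 - 2/θ) ∈ [0, 1)` and `u = 1 - s ∈ (0, 1]`. Since `θ (1 - s²) = 2`, the algebraic part
of `m` is `θ (1 + s) / 2 - 1/2 = 1/u - 1/2`, so `m θ = 1/u + log u - 1/2 - log 2`. As `θ` increases,
`u` decreases, and `u ↦ 1/u + log u` is strictly decreasing on `(0, 1]`: for `a < b ≤ 1`,
`log (b/a) < b/a - 1 ≤ 1/a - 1/b`.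
-/

noncomputable def m (θ : ℝ) : ℝ :=
  θ / 2 - 1 / 2 + θ / 2 * Real.sqrt (1 - 2 / θ) +
    Real.log (1 / 2 - 1 / 2 * Real.sqrt (1 - 2 / θ))

open Real Set

lemma strictAntiOn_inv_add_log : StrictAntiOn (fun u : ℝ => u⁻¹ + log u) (Ioc 0 1) := by
  rintro a ⟨ha, -⟩ b ⟨-, hb⟩ hab
  have hb0 : 0 < b := ha.trans hab
  have hlog : log b - log a < b / a - 1 := by
    rw [← log_div hb0.ne' ha.ne']
    exact log_lt_sub_one_of_pos (div_pos hb0 ha) ((one_lt_div ha).2 hab).ne'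
  have hdiff : a⁻¹ - b⁻¹ - (b / a - 1) = (b - a) * (1 - b) / (a * b) := by
    field_simp
  have hnonneg : 0 ≤ (b - a) * (1 - b) / (a * b) :=
    div_nonneg (mul_nonneg (sub_nonneg.2 hab.le) (sub_nonneg.2 hb)) (mul_pos ha hb0).le
  dsimp only
  linarith

lemma sqrt_one_sub_two_div_lt_one {θ : ℝ} (hθ : 0 < θ) : √(1 - 2 / θ) < 1 := by
  rw [sqrt_lt' one_pos]
  have : 0 < 2 / θ := by positivity
  linarith

lemma one_sub_two_div_nonneg {θ : ℝ} (hθ : 2 ≤ θ) : 0 ≤ 1 - 2 / θ := by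
  rw [sub_nonneg, div_le_one (by linarith)]
  exact hθ

lemma strictMonoOn_sqrt_one_sub_two_div :
    StrictMonoOn (fun θ : ℝ => √(1 - 2 / θ)) (Ici 2) := by
  intro a ha b _ hab
  have ha0 : (0 : ℝ) < a := by linarith [mem_Ici.1 ha]
  have : 2 / b < 2 / a := div_lt_div_of_pos_left two_pos ha0 hab
  exact sqrt_lt_sqrt (one_sub_two_div_nonneg ha) (by linarith)

lemma m_eq_inv_add_log {θ : ℝ} (hθ : 2 ≤ θ) :
    m θ = (1 - √(1 - 2 / θ))⁻¹ + log (1 - √(1 - 2 / θ)) - 1 / 2 - log 2 := by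
  have hθ0 : 0 < θ := by linarith
  set s := √(1 - 2 / θ)
  have hs1 : 1 - s ≠ 0 := (sub_pos.2 (sqrt_one_sub_two_div_lt_one hθ0)).ne'
  have hs2 : θ * (1 - s ^ 2) = 2 := by
    rw [sq_sqrt (one_sub_two_div_nonneg hθ)]
    field_simp
    ring
  have hpoly : θ / 2 - 1 / 2 + θ / 2 * s = (1 - s)⁻¹ - 1 / 2 := by
    field_simp
    linear_combination hs2
  have hlog : log (1 / 2 - 1 / 2 * s) = log (1 - s) - log 2 := by
    rw [← log_div hs1 two_ne_zero]
    ring_nf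
  rw [m, hpoly, hlog]
  ring

theorem m_strictMonoOn : StrictMonoOn m (Set.Ici (2 : ℝ)) := by
  intro a ha b hb hab
  have mem_Ioc {θ : ℝ} (hθ : θ ∈ Ici 2) : 1 - √(1 - 2 / θ) ∈ Ioc 0 1 :=
    ⟨sub_pos.2 (sqrt_one_sub_two_div_lt_one (by linarith [mem_Ici.1 hθ])),
      sub_le_self _ (sqrt_nonneg _)⟩
  have key := strictAntiOn_inv_add_log (mem_Ioc hb) (mem_Ioc ha)
    (sub_lt_sub_left (strictMonoOn_sqrt_one_sub_two_div ha hb hab) 1)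
  dsimp only at key
  rw [m_eq_inv_add_log ha, m_eq_inv_add_log hb]
  linarith
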